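/- Any connected Lie group that admits a discrete subgroup with compact quotient is unimodular (in particular it admits a bi-invariant volume form). -/

import Mathlib

/-!
Let `Γ` act on `G` by left multiplication. Cover a compact set meeting every `Γ`-orbit by finitely
many right translates `V g` of a neighbourhood `V` of `1` with `V V⁻¹ ∩ Γ = {1}`, and keep from
each translate the points whose orbit misses all earlier ones: this gives a measurable strict
fundamental domain `F` inside a compact set. Right translation by `g` commutes with the action, so
`F g` is again a fundamental domain, and all fundamental domains have the same measure for a left
Haar measure `μ`. As `μ (F g) = Δ(g) μ F` with `0 < μ F < ∞`, the modular function `Δ` is `1`.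
Connectedness makes `G` σ-compact, hence second countable as a manifold, so that `Γ` is countable.
-/

open MeasureTheory Set
open scoped Topology Pointwise ENNReal

section FundamentalDomain

variable {Γ α : Type*} [Group Γ] [MulAction Γ α]

/-- The saturations of the `W j`, made disjoint, partition `α` into invariant pieces, and inside
the `i`-th piece `W i` meets every orbit exactly once. -/
theorem existsUnique_smul_mem_iUnion_inter_disjointed (W : ℕ → Set α)
    (hW : ∀ i, ∀ x ∈ W i, ∀ γ : Γ, γ • x ∈ W i → γ = 1)
    (hcover : ∀ x : α, ∃ i, ∃ γ : Γ, γ • x ∈ W i) (x : α) :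
    ∃! γ : Γ, γ • x ∈ ⋃ i, W i ∩ disjointed (fun j => {y | ∃ γ : Γ, γ • y ∈ W j}) i := by
  set S : ℕ → Set α := fun j => {y | ∃ γ : Γ, γ • y ∈ W j}
  have hS (j : ℕ) (γ : Γ) (y : α) : γ • y ∈ S j ↔ y ∈ S j :=
    ⟨fun ⟨δ, hδ⟩ => ⟨δ * γ, by rwa [mul_smul]⟩,
      fun ⟨δ, hδ⟩ => ⟨δ * γ⁻¹, by rwa [mul_smul, inv_smul_smul]⟩⟩
  have hD (i : ℕ) (γ : Γ) (y : α) : γ • y ∈ disjointed S i ↔ y ∈ disjointed S i := by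
    simp only [disjointed_eq_inter_compl S i, mem_inter_iff, mem_iInter, mem_compl_iff, hS]
  refine existsUnique_of_exists_of_unique ?_ ?_
  · have hx : x ∈ ⋃ i, disjointed S i := by
      rw [iUnion_disjointed]
      exact mem_iUnion.2 (hcover x)
    obtain ⟨i, hi⟩ := mem_iUnion.1 hx
    obtain ⟨γ, hγ⟩ := disjointed_subset S i hi
    exact ⟨γ, mem_iUnion.2 ⟨i, hγ, (hD i γ x).2 hi⟩⟩
  · intro γ₁ γ₂ h₁ h₂
    obtain ⟨i, hW₁, hD₁⟩ := mem_iUnion.1 h₁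
    obtain ⟨j, hW₂, hD₂⟩ := mem_iUnion.1 h₂
    obtain rfl : i = j := by
      by_contra hij
      exact disjoint_left.1 (disjoint_disjointed S hij) ((hD i γ₁ x).1 hD₁) ((hD j γ₂ x).1 hD₂)
    have : (γ₂ * γ₁⁻¹) • γ₁ • x ∈ W i := by rwa [smul_smul, inv_mul_cancel_right]
    exact (mul_inv_eq_one.1 (hW i _ hW₁ _ this)).symm

end FundamentalDomain

section TopologicalGroup

variable {G : Type*} [Group G] [TopologicalSpace G] [IsTopologicalGroup G]

theorem sigmaCompactSpace_of_connectedSpace [ConnectedSpace G] [WeaklyLocallyCompactSpace G] :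
    SigmaCompactSpace G := by
  obtain ⟨K, hK, hK1⟩ := exists_compact_mem_nhds (1 : G)
  set S := K ∪ K⁻¹
  have hS_inv : S⁻¹ = S := by simp [S, union_comm]
  let H : Subgroup G :=
    { carrier := ⋃ n, S ^ n
      one_mem' := mem_iUnion.2 ⟨0, by simp⟩
      mul_mem' := fun ha hb => by
        obtain ⟨m, ha⟩ := mem_iUnion.1 ha
        obtain ⟨n, hb⟩ := mem_iUnion.1 hb
        exact mem_iUnion.2 ⟨m + n, pow_add S m n ▸ mul_mem_mul ha hb⟩
      inv_mem' := fun ha => by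
        obtain ⟨n, ha⟩ := mem_iUnion.1 ha
        refine mem_iUnion.2 ⟨n, ?_⟩
        rw [← hS_inv, inv_pow]
        exact inv_mem_inv.2 ha }
  have hH : IsOpen (H : Set G) :=
    H.isOpen_of_mem_nhds (Filter.mem_of_superset hK1 fun x hx => mem_iUnion.2 ⟨1, by simp [S, hx]⟩)
  have hS_compact (n : ℕ) : IsCompact (S ^ n) := by
    induction n with
    | zero => simp
    | succ n ih => rw [pow_succ]; exact ih.mul (hK.union hK.inv)
  exact ⟨⟨fun n => S ^ n, hS_compact,
    (IsClopen.eq_univ ⟨H.isClosed_of_isOpen hH, hH⟩ ⟨1, H.one_mem⟩ :)⟩⟩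

theorem IsOpenMap.exists_isCompact_image_eq_univ {X Y : Type*} [TopologicalSpace X]
    [TopologicalSpace Y] [WeaklyLocallyCompactSpace X] [CompactSpace Y] {f : X → Y}
    (hf : IsOpenMap f) (hsurj : Function.Surjective f) : ∃ K, IsCompact K ∧ f '' K = univ := by
  choose C hC hCx using fun x : X => exists_compact_mem_nhds x
  obtain ⟨t, ht⟩ := isCompact_univ.elim_finite_subcover (fun x => f '' interior (C x))
    (fun x => hf _ isOpen_interior) fun y _ => by
      obtain ⟨x, rfl⟩ := hsurj y
      exact mem_iUnion.2 ⟨x, mem_image_of_mem f (mem_interior_iff_mem_nhds.2 (hCx x))⟩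
  refine ⟨⋃ x ∈ t, C x, t.isCompact_biUnion fun x _ => hC x, eq_univ_of_univ_subset ?_⟩
  rw [image_iUnion₂]
  exact ht.trans (iUnion₂_mono fun x _ => image_mono interior_subset)

namespace Subgroup

variable (Γ : Subgroup G)

theorem exists_isCompact_forall_exists_smul_mem [WeaklyLocallyCompactSpace G]
    [CompactSpace (G ⧸ Γ)] : ∃ K : Set G, IsCompact K ∧ ∀ x : G, ∃ γ : Γ, γ • x ∈ K := by
  obtain ⟨K, hK, hKΓ⟩ := QuotientGroup.isOpenMap_coe.exists_isCompact_image_eq_univ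
    (QuotientGroup.mk_surjective (s := Γ))
  -- `G ⧸ Γ` consists of the cosets `x Γ`; inversion turns them into the orbits `Γ x⁻¹`.
  refine ⟨K⁻¹, hK.inv, fun x => ?_⟩
  obtain ⟨k, hk, hkx⟩ := hKΓ.symm ▸ mem_univ ((x⁻¹ : G) : G ⧸ Γ)
  have hxk : x * k ∈ Γ := by simpa using QuotientGroup.eq.1 hkx.symm
  exact ⟨(⟨x * k, hxk⟩ : Γ)⁻¹, by simpa [Subgroup.smul_def] using hk⟩

theorem exists_mem_nhds_one_forall_smul_mem_eq_one [DiscreteTopology Γ] :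
    ∃ V ∈ 𝓝 (1 : G), ∀ x ∈ V, ∀ γ : Γ, γ • x ∈ V → γ = 1 := by
  obtain ⟨U, hU, hUΓ⟩ := discreteTopology_subtype_iff'.1 ‹DiscreteTopology Γ› 1 Γ.one_mem
  obtain ⟨V, hV, hVU⟩ := exists_nhds_split_inv (hU.mem_nhds (hUΓ.symm.subset rfl).1)
  refine ⟨V, hV, fun x hx γ hγx => Subtype.ext ?_⟩
  have : (γ : G) ∈ U ∩ Γ := ⟨by simpa [Subgroup.smul_def] using hVU _ hγx x hx, γ.2⟩
  simpa [hUΓ] using this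

theorem exists_measurableSet_subset_isCompact_existsUnique_smul_mem [WeaklyLocallyCompactSpace G]
    [MeasurableSpace G] [BorelSpace G] [DiscreteTopology Γ] {K : Set G} (hK : IsCompact K)
    (hΓK : ∀ x : G, ∃ γ : Γ, γ • x ∈ K) :
    ∃ F : Set G, MeasurableSet F ∧ (∃ L, IsCompact L ∧ F ⊆ L) ∧ ∀ x, ∃! γ : Γ, γ • x ∈ F := by
  obtain ⟨V₀, hV₀, hV₀Γ⟩ := Γ.exists_mem_nhds_one_forall_smul_mem_eq_one
  obtain ⟨C, hC, hC1⟩ := exists_compact_mem_nhds (1 : G)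
  set V := interior (V₀ ∩ C)
  have hV1 : (1 : G) ∈ V := mem_interior_iff_mem_nhds.2 (Filter.inter_mem hV₀ hC1)
  obtain ⟨t, ht⟩ := hK.elim_finite_subcover (fun g : G => (· * g⁻¹) ⁻¹' V)
    (fun g => isOpen_interior.preimage (continuous_mul_const _))
    fun k _ => mem_iUnion.2 ⟨k, by simpa using hV1⟩
  obtain ⟨g, hg⟩ : ∃ g : ℕ → G, (t : Set G) = range g := by
    refine t.countable_toSet.exists_eq_range ?_
    obtain ⟨γ, hγ⟩ := hΓK 1
    obtain ⟨_, ⟨g, rfl⟩, _, ⟨hg, rfl⟩, -⟩ := ht hγ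
    exact ⟨g, hg⟩
  set W : ℕ → Set G := fun i => (· * (g i)⁻¹) ⁻¹' V
  have hW_open (i : ℕ) : IsOpen (W i) := isOpen_interior.preimage (continuous_mul_const _)
  have hW (i : ℕ) : ∀ x ∈ W i, ∀ γ : Γ, γ • x ∈ W i → γ = 1 := fun x hx γ hγx =>
    hV₀Γ _ (interior_subset hx).1 γ (by simpa [W, smul_mul_assoc] using (interior_subset hγx).1)
  have hcover (x : G) : ∃ i, ∃ γ : Γ, γ • x ∈ W i := by
    obtain ⟨γ, hγ⟩ := hΓK x
    obtain ⟨_, ⟨h, rfl⟩, _, ⟨hh, rfl⟩, hγh⟩ := ht hγ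
    obtain ⟨i, rfl⟩ : h ∈ range g := hg ▸ hh
    exact ⟨i, γ, hγh⟩
  refine ⟨_, ?_, ⟨C * t, hC.mul t.finite_toSet.isCompact, ?_⟩,
    existsUnique_smul_mem_iUnion_inter_disjointed W hW hcover⟩
  · refine .iUnion fun i => (hW_open i).measurableSet.inter (.disjointed (fun j => ?_) i)
    rw [ofPred_exists]
    exact (isOpen_iUnion fun γ => (hW_open j).preimage (continuous_const_smul γ)).measurableSet
  · refine iUnion_subset fun i x ⟨hx, _⟩ => ?_
    have hgi : g i ∈ (t : Set G) := hg ▸ mem_range_self i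
    simpa using mul_mem_mul (interior_subset hx).2 hgi

end Subgroup

end TopologicalGroup

namespace MeasureTheory.Measure

variable {G : Type*} [Group G] [TopologicalSpace G] [IsTopologicalGroup G] [LocallyCompactSpace G]
  [SecondCountableTopology G] [MeasurableSpace G] [BorelSpace G]

theorem isMulRightInvariant_of_isFundamentalDomain {Γ : Subgroup G} [Countable Γ]
    (μ : Measure G) [μ.IsHaarMeasure] {F : Set G} (hF : IsFundamentalDomain Γ F μ)
    (hF_fin : μ F ≠ ∞) : μ.IsMulRightInvariant := by
  refine ⟨fun g => ?_⟩
  have hFg : IsFundamentalDomain Γ ((· * g) ⁻¹' F) μ :=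
    hF.preimage_of_equiv (quasiMeasurePreserving_mul_right μ g) Function.bijective_id
      fun γ x => smul_mul_assoc γ x g
  set c := haarScalarFactor (map (· * g) μ) μ
  have hc : map (· * g) μ = c • μ := isMulLeftInvariant_eq_smul _ μ
  have hcF : (c : ℝ≥0∞) * μ F = μ F :=
    calc (c : ℝ≥0∞) * μ F = map (· * g) μ F := by
          rw [hc, smul_apply, ENNReal.smul_def, smul_eq_mul]
      _ = μ ((· * g) ⁻¹' F) := (MeasurableEquiv.mulRight g).map_apply F
      _ = μ F := hFg.measure_eq hF
  have hc1 : c = 1 := by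
    exact_mod_cast (ENNReal.mul_eq_right (hF.measure_ne_zero (NeZero.ne μ)) hF_fin).1 hcF
  rw [hc, hc1, one_smul]

end MeasureTheory.Measure

theorem unimodular_of_discrete_cocompact_general
    {E : Type*} [NormedAddCommGroup E] [NormedSpace ℝ E] [FiniteDimensional ℝ E]
    {G : Type*} [TopologicalSpace G] [ChartedSpace E G] [Group G] [IsTopologicalGroup G]
    [ConnectedSpace G]
    [MeasurableSpace G] [BorelSpace G]
    (Γ : Subgroup G) [DiscreteTopology Γ] [CompactSpace (G ⧸ Γ)]
    (μ : Measure G) [μ.IsHaarMeasure] :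
    μ.IsMulRightInvariant := by
  have : LocallyCompactSpace G := ChartedSpace.locallyCompactSpace E G
  have : SigmaCompactSpace G := sigmaCompactSpace_of_connectedSpace
  have : SecondCountableTopology G := ChartedSpace.secondCountable_of_sigmaCompact E G
  have : Countable Γ := TopologicalSpace.separableSpace_iff_countable.1 inferInstance
  obtain ⟨K, hK, hΓK⟩ := Γ.exists_isCompact_forall_exists_smul_mem
  obtain ⟨F, hF_meas, ⟨L, hL, hFL⟩, hF⟩ :=
    Γ.exists_measurableSet_subset_isCompact_existsUnique_smul_mem hK hΓK
  exact μ.isMulRightInvariant_of_isFundamentalDomain (.mk' hF_meas.nullMeasurableSet hF)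
    (measure_mono hFL |>.trans_lt hL.measure_lt_top).ne

/-- **Lemma (Milnor).** Any connected Lie group `G` that admits a discrete subgroup `Γ` with
compact quotient is unimodular: every left-invariant Haar measure on `G` is also
right-invariant (in particular, `G` admits a bi-invariant volume form). -/
theorem unimodular_of_discrete_cocompact
    {E : Type*} [NormedAddCommGroup E] [NormedSpace ℝ E] [FiniteDimensional ℝ E]
    {G : Type*} [TopologicalSpace G] [ChartedSpace E G] [Group G] [IsTopologicalGroup G]
    [LieGroup (modelWithCornersSelf ℝ E) (⊤ : ℕ∞) G] [ConnectedSpace G]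
    [MeasurableSpace G] [BorelSpace G]
    (Γ : Subgroup G) [DiscreteTopology Γ] [CompactSpace (G ⧸ Γ)]
    (μ : Measure G) [μ.IsHaarMeasure] :
    μ.IsMulRightInvariant :=
  unimodular_of_discrete_cocompact_general (E := E) Γ μ
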